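/- Let G be a finite group, let k be a field, and let k[G] be the group algebra of G over k with its standard Hopf algebra structure. Then for every integer n ≥ 1, the n-th indicator of k[G] equals the image in k of the number of solutions to g^n = 1 in G: ν_n(k[G]) = (#{g ∈ G : g^n = 1_G} : k), i.e. the cardinality #{g ∈ G : g^n = 1_G} reduced modulo the characteristic of k. -/

import Mathlib

open scoped TensorProduct

noncomputable section GroupAlgebraHopf

variable (k G : Type*) [CommSemiring k] [Group G]

/-- Comultiplication `Δ` on `k[G]`: linear extension of `g ↦ g ⊗ g`. -/
def groupAlgebraComul : MonoidAlgebra k G →ₗ[k] MonoidAlgebra k G ⊗[k] MonoidAlgebra k G :=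
  (Finsupp.lsum k fun g : G =>
    LinearMap.toSpanSingleton k _
      (MonoidAlgebra.single g (1 : k) ⊗ₜ[k] MonoidAlgebra.single g (1 : k))) ∘ₗ
    (MonoidAlgebra.coeffLinearEquiv k).toLinearMap

/-- Counit `ε` on `k[G]`: linear extension of `g ↦ 1`. -/
def groupAlgebraCounit : MonoidAlgebra k G →ₗ[k] k :=
  (Finsupp.lsum k fun _ : G => LinearMap.id) ∘ₗ (MonoidAlgebra.coeffLinearEquiv k).toLinearMap

/-- Antipode `S` on `k[G]`: linear extension of `g ↦ g⁻¹`. -/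
def groupAlgebraAntipode : MonoidAlgebra k G →ₗ[k] MonoidAlgebra k G :=
  MonoidAlgebra.mapDomainLinearMap k k fun g : G => g⁻¹

/-- Sweedler power maps `P^(n)` on `k[G]`: `P^(0) = u ∘ ε`, `P^(n+1) = m ∘ (P^(n) ⊗ id) ∘ Δ`. -/
def groupAlgebraSweedlerPower : ℕ → MonoidAlgebra k G →ₗ[k] MonoidAlgebra k G
  | 0 => (Algebra.linearMap k (MonoidAlgebra k G)) ∘ₗ groupAlgebraCounit k G
  | n + 1 => (LinearMap.mul' k (MonoidAlgebra k G)) ∘ₗ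
      (TensorProduct.map (groupAlgebraSweedlerPower n) LinearMap.id) ∘ₗ groupAlgebraComul k G

/-- The `n`-th indicator `ν_n(k[G]) = Tr(S ∘ P^(n-1))`. -/
def groupAlgebraIndicator (n : ℕ) : k :=
  LinearMap.trace k (MonoidAlgebra k G)
    (groupAlgebraAntipode k G ∘ₗ groupAlgebraSweedlerPower k G (n - 1))

end GroupAlgebraHopf

/-! On the basis `G` of `k[G]`, `S ∘ P^(n-1)` sends `g` to the basis vector `(g^(n-1))⁻¹`, so its
trace is the number of fixed points `(g^(n-1))⁻¹ = g`, i.e. of solutions of `g^n = 1`. -/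

theorem LinearMap.trace_eq_card_fixedPoints {R M ι : Type*} [CommSemiring R] [AddCommMonoid M]
    [Module R M] [Fintype ι] (b : Module.Basis ι R M) (f : ι → ι) (φ : M →ₗ[R] M)
    (hφ : ∀ i, φ (b i) = b (f i)) :
    LinearMap.trace R M φ = Nat.card {i // f i = i} := by
  classical
  rw [LinearMap.trace_eq_matrix_trace R b, Matrix.trace, Nat.card_eq_fintype_card,
    Fintype.card_subtype, ← Finset.sum_boole]
  refine Finset.sum_congr rfl fun i _ => ?_
  rw [Matrix.diag_apply, LinearMap.toMatrix_apply, hφ, b.repr_self, Finsupp.single_apply]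

section

open MonoidAlgebra

variable {k G : Type*} [CommSemiring k] [Group G]

theorem groupAlgebraSweedlerPower_single (m : ℕ) (g : G) :
    groupAlgebraSweedlerPower k G m (single g 1) = single (g ^ m) 1 := by
  induction m with
  | zero =>
    simp [groupAlgebraSweedlerPower, groupAlgebraCounit]
  | succ m ih =>
    simp [groupAlgebraSweedlerPower, groupAlgebraComul, ih, pow_succ]

theorem groupAlgebraAntipode_single (g : G) :
    groupAlgebraAntipode k G (single g 1) = single g⁻¹ 1 :=
  mapDomainLinearMap_single _ _ _

end

/-- For a finite group `G` and a field `k`, the `n`-th indicator of the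
group algebra `k[G]` (for `n ≥ 1`) equals the image in `k` of the number of solutions of
`g ^ n = 1` in `G`. -/
theorem groupAlgebra_indicator_eq_card_solutions
    (k : Type*) (G : Type*) [Field k] [Group G] [Finite G] (n : ℕ) (hn : 1 ≤ n) :
    groupAlgebraIndicator k G n = (Nat.card {g : G // g ^ n = 1} : k) := by
  cases nonempty_fintype G
  obtain ⟨m, rfl⟩ : ∃ m, n = m + 1 := ⟨n - 1, by omega⟩
  have hbasis (g : G) : (groupAlgebraAntipode k G ∘ₗ groupAlgebraSweedlerPower k G m)
      (MonoidAlgebra.basis G k g) = MonoidAlgebra.basis G k (g ^ m)⁻¹ := by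
    simp [MonoidAlgebra.basis_apply, groupAlgebraSweedlerPower_single,
      groupAlgebraAntipode_single]
  rw [groupAlgebraIndicator, Nat.add_sub_cancel,
    LinearMap.trace_eq_card_fixedPoints _ _ _ hbasis]
  exact congrArg Nat.cast <| Nat.card_congr <| Equiv.subtypeEquivRight fun g => by
    rw [inv_eq_iff_mul_eq_one, ← pow_succ]
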